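/- arXiv:1901.08051 — 5 statements merged into one kernel-verified Lean document; each statement's English description precedes it below -/
import Mathlib

section
/- If a poset P is weakly directed (any two elements with a lower bound have an upper bound), then for every order-preserving map f : P → P' between weakly directed posets and every maximal element l of P, there exists a unique maximal element l' of P' with f(l) ≤ l'. -/
/-- If a poset `P` is weakly directed, then for every order-preserving map
`f : P → P'` between (finite) weakly directed posets and every maximal element `l` of `P`,
there exists a unique maximal element `l'` of `P'` with `f l ≤ l'`. -/
theorem stmt0 {P P' : Type*} [PartialOrder P] [PartialOrder P'] [Fintype P] [Fintype P']
    (hP : ∀ a b : P, (∃ c, c ≤ a ∧ c ≤ b) → ∃ d, a ≤ d ∧ b ≤ d)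
    (hP' : ∀ a b : P', (∃ c, c ≤ a ∧ c ≤ b) → ∃ d, a ≤ d ∧ b ≤ d)
    (f : P → P') (hf : Monotone f) (l : P) (hl : IsMax l) :
    ∃! l' : P', IsMax l' ∧ f l ≤ l' := by
  obtain ⟨b, hb, hbmax⟩ := Finite.exists_le_maximal (p := fun _ : P' => True) (a := f l) trivial
  refine ⟨b, ⟨fun x hx => hbmax.2 trivial hx, hb⟩, ?_⟩
  rintro y ⟨hy, hly⟩
  obtain ⟨d, hyd, hbd⟩ := hP' y b ⟨f l, hly, hb⟩
  have h1 : y = d := le_antisymm hyd (hy hyd)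
  have h2 : b = d := le_antisymm hbd (hbmax.2 trivial hbd)
  rw [h1, h2]
end

section
/- The map M sending a finite weakly directed poset to its set of maximal elements extends to a functor from the category of finite weakly directed posets with order-preserving maps to the category of finite sets, and this functor is left adjoint to the free functor Free sending a set S to the discrete poset (S, =). -/
open CategoryTheory

/-- The category of finite weakly directed posets with order-preserving maps. -/
structure WDPoset where
  carrier : Type
  [fintype : Fintype carrier]
  [partialOrder : PartialOrder carrier]
  weaklyDirected : ∀ a b : carrier, (∃ c, c ≤ a ∧ c ≤ b) → ∃ d, a ≤ d ∧ b ≤ d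

attribute [instance] WDPoset.fintype WDPoset.partialOrder

instance : CategoryTheory.Category WDPoset where
  Hom P Q := { f : P.carrier → Q.carrier // Monotone f }
  id P := ⟨id, monotone_id⟩
  comp f g := ⟨g.1 ∘ f.1, g.2.comp f.2⟩

noncomputable instance (P : WDPoset) : Fintype { x : P.carrier // IsMax x } :=
  Fintype.ofFinite _

/-- Every element lies below a maximal element (finite poset). -/
lemma WDPoset.exists_max (P : WDPoset) (x : P.carrier) :
    ∃ m : P.carrier, x ≤ m ∧ IsMax m := by
  obtain ⟨b, hb, hmax⟩ := Finite.exists_le_maximal (p := fun _ : P.carrier => True) trivial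
  exact ⟨b, hb, fun y hy => hmax.2 trivial hy⟩

/-- The canonical maximal element above `x`. -/
noncomputable def WDPoset.mx (P : WDPoset) (x : P.carrier) : { y : P.carrier // IsMax y } :=
  ⟨(P.exists_max x).choose, (P.exists_max x).choose_spec.2⟩

lemma WDPoset.le_mx (P : WDPoset) (x : P.carrier) : x ≤ (P.mx x).1 :=
  (P.exists_max x).choose_spec.1

/-- Uniqueness of the maximal element above a given element, by weak directedness. -/
lemma WDPoset.mx_unique (P : WDPoset) {x m : P.carrier} (hm : IsMax m) (hxm : x ≤ m) :
    (P.mx x).1 = m := by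
  obtain ⟨d, h1, h2⟩ := P.weaklyDirected (P.mx x).1 m ⟨x, P.le_mx x, hxm⟩
  have e1 : (P.mx x).1 = d := le_antisymm h1 ((P.mx x).2 h1)
  have e2 : m = d := le_antisymm h2 (hm h2)
  rw [e1, e2]

lemma WDPoset.mx_of_max (P : WDPoset) {m : P.carrier} (hm : IsMax m) : (P.mx m).1 = m :=
  P.mx_unique hm le_rfl

lemma WDPoset.mx_le_eq (P : WDPoset) {x y : P.carrier} (h : x ≤ y) :
    (P.mx x) = (P.mx y) :=
  Subtype.ext (P.mx_unique (P.mx y).2 (h.trans (P.le_mx y)))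

noncomputable def Mfun : WDPoset ⥤ FintypeCat where
  obj P := FintypeCat.of { x : P.carrier // IsMax x }
  map {P Q} f := FintypeCat.homMk (fun x : { x : P.carrier // IsMax x } => Q.mx (f.1 x.1))
  map_id P := by
    ext x : 1
    exact Subtype.ext (P.mx_of_max x.2)
  map_comp {P Q R} f g := by
    ext x : 1
    show R.mx (g.1 (f.1 x.1)) = R.mx (g.1 (Q.mx (f.1 x.1)).1)
    exact R.mx_le_eq (g.2 (Q.le_mx (f.1 x.1)))

def discOrder (S : Type) : PartialOrder S where
  le a b := a = b
  le_refl _ := rfl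
  le_trans _ _ _ h1 h2 := Eq.trans h1 h2
  le_antisymm _ _ h _ := h

lemma discOrder_le_iff {S : Type} (a b : S) :
    @LE.le S (discOrder S).toLE a b ↔ a = b := Iff.rfl

noncomputable def FreeFun : FintypeCat ⥤ WDPoset where
  obj S := { carrier := S
             fintype := Fintype.ofFinite S
             partialOrder := discOrder S
             weaklyDirected := fun a b h => by
               obtain ⟨c, h1, h2⟩ := h
               rw [discOrder_le_iff] at h1 h2
               exact ⟨a, (discOrder_le_iff a a).mpr rfl, (discOrder_le_iff b a).mpr (h2.symm.trans h1)⟩ }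
  map {S T} f := ⟨fun a => f a, fun a b h =>
    (discOrder_le_iff (f a) (f b)).mpr (congrArg f ((discOrder_le_iff a b).mp h))⟩
  map_id S := rfl
  map_comp f g := rfl

noncomputable def adjMF : Mfun ⊣ FreeFun :=
  Adjunction.mkOfHomEquiv
    { homEquiv := fun P S =>
        { toFun := fun u => ⟨fun x => u (P.mx x), fun a b h =>
            (discOrder_le_iff _ _).mpr (congrArg u (P.mx_le_eq h))⟩
          invFun := fun v => FintypeCat.homMk (fun x : { x : P.carrier // IsMax x } => v.1 x.1)
          left_inv := fun u => by
            ext x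
            exact congrArg u (Subtype.ext (P.mx_of_max x.2))
          right_inv := fun v => by
            apply Subtype.ext
            funext x
            exact ((discOrder_le_iff _ _).mp (v.2 (P.le_mx x))).symm }
      homEquiv_naturality_left_symm := fun {P Q S} f u => by
        ext x
        exact (discOrder_le_iff _ _).mp (u.2 (Q.le_mx (f.1 x.1)))
      homEquiv_naturality_right := fun {P S T} u g => rfl }

/-- The map sending a finite weakly directed poset to its set of maximal elements
extends to a functor `M : WDPoset ⥤ FintypeCat` which is left adjoint to the free functor
`Free : FintypeCat ⥤ WDPoset` sending a finite set `S` to the discrete poset `(S, =)`. -/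
theorem stmt3 :
    ∃ (M : WDPoset ⥤ FintypeCat) (Free : FintypeCat ⥤ WDPoset) (_ : M ⊣ Free),
      (∀ P : WDPoset, M.obj P = FintypeCat.of { x : P.carrier // IsMax x }) ∧
      (∀ S : FintypeCat, ∃ _ : (Free.obj S).carrier = S,
        ∀ a b : (Free.obj S).carrier, a ≤ b ↔ a = b) := by
  exact ⟨Mfun, FreeFun, adjMF, fun P => rfl, fun S => ⟨rfl, fun a b => ⟨fun h => h, fun h => h⟩⟩⟩
end

section
/- In a finite weakly directed poset P, every element that is maximal in P ∖ M(P) (the complement of the set of maximal elements of P) is an upbeat point, i.e., the set of elements strictly greater than it has a minimum. -/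
/-- In a finite weakly directed poset `P`, every element that is maximal in the
complement of the set of maximal elements of `P` is an upbeat point: the set of elements
strictly greater than it has a minimum. -/
theorem stmt5 {P : Type*} [PartialOrder P] [Fintype P]
    (hP : ∀ a b : P, (∃ c, c ≤ a ∧ c ≤ b) → ∃ d, a ≤ d ∧ b ≤ d)
    (p : P) (hp : ¬ IsMax p)
    (hmax : ∀ q : P, ¬ IsMax q → p ≤ q → q ≤ p) :
    ∃ m : P, p < m ∧ ∀ q : P, p < q → m ≤ q := by
  obtain ⟨m, hm⟩ := not_isMax_iff.mp hp
  refine ⟨m, hm, fun q hq => ?_⟩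
  obtain ⟨d, hmd, hqd⟩ := hP m q ⟨p, hm.le, hq.le⟩
  have hqmax : IsMax q := by
    by_contra h; exact absurd (hmax q h hq.le) hq.not_ge
  exact hmd.trans (hqmax hqd)
end

section
/- Let G be a simple graph, k ≥ 1, and X₀ ⊆ X₁, X₀ ⊆ X₂ subgraphs of G with X₀, X₁, X₂ all k-vertex-connected. Then X₁ ∪ X₂ is k-vertex-connected. -/
/-- A subgraph is `k`-vertex-connected if it has at least `k` vertices and the induced
subgraph obtained by deleting any set of fewer than `k` vertices is connected. -/
def KVertexConnected {V : Type*} (G : SimpleGraph V) (k : ℕ) (X : G.Subgraph) : Prop :=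
  k ≤ X.verts.ncard ∧
    ∀ S : Set V, S.Finite → S.ncard < k → (X.deleteVerts S).Connected

lemma deleteVerts_sup' {V : Type*} {G : SimpleGraph V} (X₁ X₂ : G.Subgraph) (S : Set V) :
    (X₁ ⊔ X₂).deleteVerts S = X₁.deleteVerts S ⊔ X₂.deleteVerts S := by
  ext v w
  · simp [SimpleGraph.Subgraph.deleteVerts_verts, Set.union_diff_distrib]
  · simp only [SimpleGraph.Subgraph.deleteVerts_adj, SimpleGraph.Subgraph.sup_adj,
      SimpleGraph.Subgraph.verts_sup, Set.mem_union]
    constructor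
    · rintro ⟨hv, hvs, hw, hws, h | h⟩
      · exact Or.inl ⟨h.fst_mem, hvs, h.snd_mem, hws, h⟩
      · exact Or.inr ⟨h.fst_mem, hvs, h.snd_mem, hws, h⟩
    · rintro (⟨hv, hvs, hw, hws, h⟩ | ⟨hv, hvs, hw, hws, h⟩)
      · exact ⟨Or.inl hv, hvs, Or.inl hw, hws, Or.inl h⟩
      · exact ⟨Or.inr hv, hvs, Or.inr hw, hws, Or.inr h⟩

/-- If `X₀ ⊆ X₁`, `X₀ ⊆ X₂` are subgraphs with `X₀, X₁, X₂` all
`k`-vertex-connected (`k ≥ 1`), then `X₁ ∪ X₂` is `k`-vertex-connected. -/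
theorem stmt10 {V : Type*} (G : SimpleGraph V) (k : ℕ) (hk : 1 ≤ k)
    (X₀ X₁ X₂ : G.Subgraph) (h₀₁ : X₀ ≤ X₁) (h₀₂ : X₀ ≤ X₂)
    (h₀ : KVertexConnected G k X₀) (h₁ : KVertexConnected G k X₁)
    (h₂ : KVertexConnected G k X₂) :
    KVertexConnected G k (X₁ ⊔ X₂) := by
  obtain ⟨hc₁, hd₁⟩ := h₁
  obtain ⟨hc₀, hd₀⟩ := h₀
  obtain ⟨hc₂, hd₂⟩ := h₂
  have hfin₁ : X₁.verts.Finite := by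
    by_contra hinf
    rw [Set.Infinite.ncard hinf] at hc₁; omega
  have hfin₂ : X₂.verts.Finite := by
    by_contra hinf
    rw [Set.Infinite.ncard hinf] at hc₂; omega
  constructor
  · calc k ≤ X₁.verts.ncard := hc₁
      _ ≤ (X₁ ⊔ X₂).verts.ncard :=
        Set.ncard_le_ncard (by simp) (by simpa using hfin₁.union hfin₂)
  · intro S hS hSk
    rw [deleteVerts_sup']
    refine (SimpleGraph.Subgraph.connected_sup (hd₁ S hS hSk).preconnected (hd₂ S hS hSk).preconnected ?_)
    obtain ⟨v, hv⟩ := (hd₀ S hS hSk).nonempty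
    refine ⟨v, ?_, ?_⟩
    · exact (SimpleGraph.Subgraph.deleteVerts_mono h₀₁).1 hv
    · exact (SimpleGraph.Subgraph.deleteVerts_mono h₀₂).1 hv
end

section
/- Let G be a simple graph, k ≥ 1, and X₀ ⊆ X₁, X₀ ⊆ X₂ subgraphs of G with X₀, X₁, X₂ all k-edge-connected. Then X₁ ∪ X₂ is k-edge-connected. -/
/-- A subgraph is `k`-edge-connected if it remains connected after removing any set of fewer
than `k` edges. -/
def KEdgeConnected {V : Type*} (G : SimpleGraph V) (k : ℕ) (X : G.Subgraph) : Prop :=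
  ∀ s : Set (Sym2 V), s.Finite → s.ncard < k → (X.deleteEdges s).Connected

/-- If `X₀ ⊆ X₁`, `X₀ ⊆ X₂` are subgraphs with `X₀, X₁, X₂` all
`k`-edge-connected (`k ≥ 1`), then `X₁ ∪ X₂` is `k`-edge-connected. -/
theorem stmt11 {V : Type*} (G : SimpleGraph V) (k : ℕ) (hk : 1 ≤ k)
    (X₀ X₁ X₂ : G.Subgraph) (h₀₁ : X₀ ≤ X₁) (h₀₂ : X₀ ≤ X₂)
    (h₀ : KEdgeConnected G k X₀) (h₁ : KEdgeConnected G k X₁)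
    (h₂ : KEdgeConnected G k X₂) :
    KEdgeConnected G k (X₁ ⊔ X₂) := by
  intro s hsf hs
  have key : (X₁ ⊔ X₂).deleteEdges s = X₁.deleteEdges s ⊔ X₂.deleteEdges s := by
    ext v w <;> simp [SimpleGraph.Subgraph.deleteEdges_verts,
      SimpleGraph.Subgraph.deleteEdges_adj, or_and_right]
  rw [key]
  have hc₁ := h₁ s hsf hs
  have hc₂ := h₂ s hsf hs
  have hc₀ := h₀ s hsf hs
  refine SimpleGraph.Subgraph.connected_sup hc₁.preconnected hc₂.preconnected ?_
  obtain ⟨v, hv⟩ := hc₀.nonempty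
  exact ⟨v, ⟨h₀₁.1 hv, h₀₂.1 hv⟩⟩
end
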